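/- Let G be a finite simple graph and M a module of G such that the induced subgraph G[M] is a cluster graph but not a clique, and such that N_G(M) = {v} for a single vertex v. Then opt_asso(G) = opt_asso(G − N_G[M]) + 1, where N_G[M] = M ∪ {v}. -/

import Mathlib

open SimpleGraph

/-- `M` is a module of `G`: every vertex outside `M` is adjacent to all
vertices of `M` or to none of them. -/
def IsModule {V : Type*} (G : SimpleGraph V) (M : Set V) : Prop :=
  ∀ x ∉ M, (∀ a ∈ M, G.Adj x a) ∨ (∀ a ∈ M, ¬ G.Adj x a)

/-- A module is strong if it overlaps no other module. -/
def IsStrongModule {V : Type*} (G : SimpleGraph V) (M : Set V) : Prop :=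
  IsModule G M ∧
    ∀ M' : Set V, IsModule G M' → (M ∩ M').Nonempty → M ⊆ M' ∨ M' ⊆ M

/-- A nonempty strong module ≠ V(G) whose only proper strong superset is V(G). -/
def IsMaximalStrongModule {V : Type*} (G : SimpleGraph V) (M : Set V) : Prop :=
  IsStrongModule G M ∧ M.Nonempty ∧ M ≠ Set.univ ∧
    ∀ M' : Set V, IsStrongModule G M' → M ⊂ M' → M' = Set.univ

/-- Quotient graph defined by a family `P` of vertex sets: two members are
adjacent iff they are distinct and completely adjacent in `G`. -/
def QuotientOn {V : Type*} (G : SimpleGraph V) (P : Set (Set V)) : SimpleGraph P where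
  Adj A B := A ≠ B ∧ ∀ a ∈ (A : Set V), ∀ b ∈ (B : Set V), G.Adj a b
  symm := by
    constructor
    intro A B h
    exact ⟨Ne.symm h.1, fun b hb a ha => (h.2 a ha b hb).symm⟩
  loopless := by
    constructor
    intro A h
    exact h.1 rfl

/-- The quotient graph Q̃(G), on the maximal strong modules of `G`. -/
def QuotientGraph {V : Type*} (G : SimpleGraph V) :
    SimpleGraph {M : Set V | IsMaximalStrongModule G M} :=
  QuotientOn G {M : Set V | IsMaximalStrongModule G M}

/-- A graph is prime if it has at least four vertices and all its modules are
trivial (empty, singletons, or the whole vertex set). -/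
def IsPrimeGraph {W : Type*} (H : SimpleGraph W) : Prop :=
  4 ≤ Nat.card W ∧
    ∀ M : Set W, IsModule H M → M = ∅ ∨ M = Set.univ ∨ ∃ w, M = {w}

/-- `G` contains an induced copy of `H`. -/
def HasInducedCopy {W V : Type*} (H : SimpleGraph W) (G : SimpleGraph V) : Prop :=
  ∃ f : W ↪ V, ∀ a b : W, G.Adj (f a) (f b) ↔ H.Adj a b

/-- The path on four vertices. -/
def GraphP4 : SimpleGraph (Fin 4) :=
  SimpleGraph.fromRel fun a b =>
    (a, b) ∈ ([(0, 1), (1, 2), (2, 3)] : List (Fin 4 × Fin 4))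

/-- The cycle on four vertices. -/
def GraphC4 : SimpleGraph (Fin 4) :=
  SimpleGraph.fromRel fun a b =>
    (a, b) ∈ ([(0, 1), (1, 2), (2, 3), (0, 3)] : List (Fin 4 × Fin 4))

/-- The bull: triangle 0,1,2 with pendant 3 at 0 and pendant 4 at 2. -/
def GraphBull : SimpleGraph (Fin 5) :=
  SimpleGraph.fromRel fun a b =>
    (a, b) ∈ ([(0, 1), (0, 2), (1, 2), (0, 3), (2, 4)] : List (Fin 5 × Fin 5))

/-- The dart: triangle 0,1,2; vertex 4 adjacent exactly to 0 and 2;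
vertex 3 adjacent exactly to 0. -/
def GraphDart : SimpleGraph (Fin 5) :=
  SimpleGraph.fromRel fun a b =>
    (a, b) ∈ ([(0, 1), (0, 2), (1, 2), (0, 4), (2, 4), (0, 3)] : List (Fin 5 × Fin 5))

/-- The fox: adjacent vertices 0,1 and pairwise nonadjacent 2,3,4, each
adjacent to both 0 and 1 (K5 minus a triangle). -/
def GraphFox : SimpleGraph (Fin 5) :=
  SimpleGraph.fromRel fun a b =>
    (a, b) ∈ ([(0, 1), (0, 2), (0, 3), (0, 4), (1, 2), (1, 3), (1, 4)] : List (Fin 5 × Fin 5))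

/-- The gem: induced path 0-1-2-3 plus vertex 4 adjacent to all of them. -/
def GraphGem : SimpleGraph (Fin 5) :=
  SimpleGraph.fromRel fun a b =>
    (a, b) ∈ ([(0, 1), (1, 2), (2, 3), (0, 4), (1, 4), (2, 4), (3, 4)] : List (Fin 5 × Fin 5))

/-- `G` has no induced subgraph isomorphic to a member of
F = {C4, bull, dart, fox, gem}. -/
def FFree {V : Type*} (G : SimpleGraph V) : Prop :=
  ¬ HasInducedCopy GraphC4 G ∧ ¬ HasInducedCopy GraphBull G ∧
  ¬ HasInducedCopy GraphDart G ∧ ¬ HasInducedCopy GraphFox G ∧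
  ¬ HasInducedCopy GraphGem G

/-- `X` is an association set of `G`: the graph `G - X` has no induced `P₃`,
i.e., every component of `G - X` is a clique. -/
def IsAssociationSet {V : Type*} (G : SimpleGraph V) (X : Set V) : Prop :=
  ∀ a b c : V, a ∉ X → b ∉ X → c ∉ X →
    G.Adj a b → G.Adj b c → a ≠ c → G.Adj a c

/-- `X` is a dissociation set of `G`: the graph `G - X` has no `P₃` subgraph,
i.e., every component of `G - X` has at most two vertices. -/
def IsDissociationSet {V : Type*} (G : SimpleGraph V) (X : Set V) : Prop :=
  ∀ a b c : V, a ∉ X → b ∉ X → c ∉ X → G.Adj a b → G.Adj b c → a = c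

/-- Minimum cardinality of an association set of `G`. -/
noncomputable def optAsso {V : Type*} (G : SimpleGraph V) : ℕ :=
  sInf {n : ℕ | ∃ X : Set V, IsAssociationSet G X ∧ X.ncard = n}

/-- Minimum cardinality of a dissociation set of `G`. -/
noncomputable def optDiss {V : Type*} (G : SimpleGraph V) : ℕ :=
  sInf {n : ℕ | ∃ X : Set V, IsDissociationSet G X ∧ X.ncard = n}

/-! The vertex `v` together with any two nonadjacent vertices of `M` forms an induced `P₃`, so
every association set meets `N[M]`, and deleting `N[M]` lowers the optimum by at least one.
Conversely, since `v` separates `M` from the rest of the graph and `G[M]` is a cluster graph,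
adding `v` to an association set of `G - N[M]` yields one of `G`. -/

section Association

variable {V : Type*} (G : SimpleGraph V)

theorem IsAssociationSet.mem_or_mem_or_mem {G : SimpleGraph V} {X : Set V}
    (hX : IsAssociationSet G X) {a b c : V} (hab : G.Adj a b) (hbc : G.Adj b c) (hac : a ≠ c)
    (hnac : ¬ G.Adj a c) : a ∈ X ∨ b ∈ X ∨ c ∈ X := by
  by_contra! h
  exact hnac (hX a b c h.1 h.2.1 h.2.2 hab hbc hac)

theorem isAssociationSet_univ : IsAssociationSet G Set.univ :=
  fun a _ _ ha => absurd (Set.mem_univ a) ha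

theorem optAsso_le {X : Set V} (hX : IsAssociationSet G X) : optAsso G ≤ X.ncard :=
  Nat.sInf_le ⟨X, hX, rfl⟩

theorem exists_isAssociationSet_ncard_eq_optAsso :
    ∃ X : Set V, IsAssociationSet G X ∧ X.ncard = optAsso G :=
  Nat.sInf_mem (s := {n | ∃ X : Set V, IsAssociationSet G X ∧ X.ncard = n})
    ⟨_, Set.univ, isAssociationSet_univ G, rfl⟩

theorem IsAssociationSet.preimage_val {G : SimpleGraph V} {X : Set V}
    (hX : IsAssociationSet G X) (S : Set V) :
    IsAssociationSet (G.induce S) (Subtype.val ⁻¹' X) :=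
  fun a b c ha hb hc hab hbc hac => hX a b c ha hb hc hab hbc (Subtype.val_injective.ne hac)

theorem IsAssociationSet.union_image_val {S Y : Set V} {X : Set S}
    (hX : IsAssociationSet (G.induce S) X)
    (hsep : ∀ x ∈ S, ∀ y ∉ S ∪ Y, ¬ G.Adj x y) (hcluster : IsAssociationSet G (S ∪ Y)) :
    IsAssociationSet G (Y ∪ Subtype.val '' X) := by
  intro a b c ha hb hc hab hbc hac
  simp only [Set.mem_union, not_or] at ha hb hc
  by_cases hbS : b ∈ S
  · have haS : a ∈ S := of_not_not fun haS => hsep b hbS a (by simp [haS, ha.1]) hab.symm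
    have hcS : c ∈ S := of_not_not fun hcS => hsep b hbS c (by simp [hcS, hc.1]) hbc
    exact hX ⟨a, haS⟩ ⟨b, hbS⟩ ⟨c, hcS⟩ (fun h => ha.2 ⟨_, h, rfl⟩) (fun h => hb.2 ⟨_, h, rfl⟩)
      (fun h => hc.2 ⟨_, h, rfl⟩) hab hbc (fun h => hac (congrArg Subtype.val h))
  · have haS : a ∉ S := fun haS => hsep a haS b (by simp [hbS, hb.1]) hab
    have hcS : c ∉ S := fun hcS => hsep c hcS b (by simp [hbS, hb.1]) hbc.symm
    exact hcluster a b c (by simp [haS, ha.1]) (by simp [hbS, hb.1]) (by simp [hcS, hc.1])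
      hab hbc hac

theorem optAsso_le_optAsso_induce_add {S Y : Set V}
    (hsep : ∀ x ∈ S, ∀ y ∉ S ∪ Y, ¬ G.Adj x y) (hcluster : IsAssociationSet G (S ∪ Y)) :
    optAsso G ≤ optAsso (G.induce S) + Y.ncard := by
  obtain ⟨X, hX, hcard⟩ := exists_isAssociationSet_ncard_eq_optAsso (G.induce S)
  calc optAsso G ≤ (Y ∪ Subtype.val '' X).ncard :=
        optAsso_le G (hX.union_image_val G hsep hcluster)
    _ ≤ Y.ncard + (Subtype.val '' X).ncard := Set.ncard_union_le _ _
    _ = optAsso (G.induce S) + Y.ncard := by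
        rw [Set.ncard_image_of_injective _ Subtype.val_injective, hcard, add_comm]

theorem optAsso_induce_lt [Finite V] {S : Set V}
    (hmeet : ∀ X, IsAssociationSet G X → ∃ x ∈ X, x ∉ S) :
    optAsso (G.induce S) < optAsso G := by
  obtain ⟨X, hX, hcard⟩ := exists_isAssociationSet_ncard_eq_optAsso G
  obtain ⟨x, hxX, hxS⟩ := hmeet X hX
  have hssub : X ∩ S ⊂ X :=
    Set.ssubset_iff_subset_ne.2 ⟨Set.inter_subset_left, fun h => hxS (h ▸ hxX).2⟩
  calc optAsso (G.induce S) ≤ (Subtype.val ⁻¹' X : Set S).ncard :=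
        optAsso_le _ (hX.preimage_val S)
    _ = (X ∩ S).ncard := by
        rw [← Set.ncard_image_of_injective _ Subtype.val_injective,
          Set.image_preimage_eq_inter_range, Subtype.range_coe]
    _ < X.ncard := Set.ncard_lt_ncard hssub
    _ = optAsso G := hcard

end Association

/-- If a module `M` induces a cluster graph that is not a clique
and has exactly one neighbor `v`, then `opt_asso(G) = opt_asso(G - N[M]) + 1`. -/
theorem stmt_16 {V : Type*} [Fintype V] (G : SimpleGraph V) (M : Set V) (v : V)
    (hmod : IsModule G M)
    (hcluster : ∀ a ∈ M, ∀ b ∈ M, ∀ c ∈ M, G.Adj a b → G.Adj b c → a ≠ c → G.Adj a c)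
    (hnc : ¬ G.IsClique M)
    (hN : {u : V | u ∉ M ∧ ∃ a ∈ M, G.Adj u a} = {v}) :
    optAsso G = optAsso (G.induce (M ∪ {v})ᶜ) + 1 := by
  have hv : v ∈ {u : V | u ∉ M ∧ ∃ a ∈ M, G.Adj u a} := hN ▸ rfl
  obtain ⟨hvM, a₀, ha₀, hva₀⟩ := hv
  have honly : ∀ u ∉ M, ∀ a ∈ M, G.Adj u a → u = v := fun u hu a ha hua =>
    (hN ▸ ⟨hu, a, ha, hua⟩ : u ∈ ({v} : Set V))
  have hvadj : ∀ a ∈ M, G.Adj v a := (hmod v hvM).resolve_right fun h => h a₀ ha₀ hva₀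
  obtain ⟨a, ha, b, hb, hab, hnab⟩ : ∃ a ∈ M, ∃ b ∈ M, a ≠ b ∧ ¬ G.Adj a b := by
    simpa [SimpleGraph.IsClique, Set.Pairwise] using hnc
  apply le_antisymm
  · have hrest : ∀ x, x ∉ (M ∪ {v})ᶜ ∪ {v} ↔ x ∈ M := fun x => by
      by_cases hx : x = v <;> simp [hx, hvM]
    have hsep : ∀ x ∈ (M ∪ {v})ᶜ, ∀ y ∉ (M ∪ {v})ᶜ ∪ {v}, ¬ G.Adj x y := by
      intro x hx y hy hxy
      simp only [Set.mem_compl_iff, Set.mem_union, Set.mem_singleton_iff, not_or] at hx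
      exact hx.2 (honly x hx.1 y ((hrest y).1 hy) hxy)
    have hcluster' : IsAssociationSet G ((M ∪ {v})ᶜ ∪ {v}) := fun a b c ha hb hc =>
      hcluster a ((hrest a).1 ha) b ((hrest b).1 hb) c ((hrest c).1 hc)
    simpa using optAsso_le_optAsso_induce_add G hsep hcluster'
  · refine optAsso_induce_lt G fun X hX => ?_
    rcases hX.mem_or_mem_or_mem (hvadj a ha).symm (hvadj b hb) hab hnab with h | h | h
    · exact ⟨a, h, by simp [ha]⟩
    · exact ⟨v, h, by simp⟩
    · exact ⟨b, h, by simp [hb]⟩
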